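/- Let ρ be a density matrix of size d with eigenvalues λ₁, …, λ_d (with multiplicity), and let H = −∑ᵢ λᵢ log₂ λᵢ be its von Neumann entropy. For any δ > 0, the total weight of non-typical eigenvalues of ρ^⊗n, namely p_n = ∑ over tuples x : Fin n → Fin d with ∏ᵢ λ_{x(i)} ∉ [2^{−n(H+δ)}, 2^{−n(H−δ)}] of ∏ᵢ λ_{x(i)}, converges to 0 exponentially fast in n: there exist κ > 0 and C > 0 such that p_n ≤ C · 2^{−κn} for all n ∈ ℕ. -/

import Mathlib

open scoped BigOperators ComplexOrder
open Matrix Filter MeasureTheory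

noncomputable section

namespace QMarkov

variable {ι : Type*}

/-- Positive semidefinite square root of a matrix (junk value `0` if not PSD). -/
noncomputable def matSqrt [Fintype ι] (A : Matrix ι ι ℂ) : Matrix ι ι ℂ := by
  classical exact if h : A.PosSemidef then
    (h.1.eigenvectorUnitary : Matrix ι ι ℂ) *
      Matrix.diagonal ((↑) ∘ (fun x : ℝ => Real.sqrt x) ∘ h.1.eigenvalues) *
      (star h.1.eigenvectorUnitary : Matrix ι ι ℂ) else 0

/-- Trace norm (sum of singular values). -/
noncomputable def traceNorm [Fintype ι] (A : Matrix ι ι ℂ) : ℝ :=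
  (matSqrt (Aᴴ * A)).trace.re

/-- Fidelity `F(ρ,σ) = ‖√ρ √σ‖₁`. -/
noncomputable def fid [Fintype ι] (ρ σ : Matrix ι ι ℂ) : ℝ :=
  traceNorm (matSqrt ρ * matSqrt σ)

/-- Generalized trace distance `Δ(ρ,σ) = ½‖ρ-σ‖₁ + ½|tr(ρ-σ)|`. -/
noncomputable def tdist [Fintype ι] (ρ σ : Matrix ι ι ℂ) : ℝ :=
  (1 / 2) * traceNorm (ρ - σ) + (1 / 2) * ‖(ρ - σ).trace‖

/-- Von Neumann entropy `H(ρ) = -∑ᵢ λᵢ log₂ λᵢ` (junk `0` if not Hermitian);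
the convention `0 · log₂ 0 = 0` is automatic since `Real.logb 2 0 = 0`. -/
noncomputable def vnEntropy [Fintype ι] (A : Matrix ι ι ℂ) : ℝ := by
  classical exact
    if h : A.IsHermitian then -∑ i, h.eigenvalues i * Real.logb 2 (h.eigenvalues i) else 0

/-- Matrix base-2 logarithm on the support of a Hermitian matrix (junk `0` if not Hermitian). -/
noncomputable def mlog [Fintype ι] (A : Matrix ι ι ℂ) : Matrix ι ι ℂ := by
  classical exact
    if h : A.IsHermitian then
      (h.eigenvectorUnitary : Matrix ι ι ℂ) *
        Matrix.diagonal (fun i => (Real.logb 2 (h.eigenvalues i) : ℂ)) *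
        (h.eigenvectorUnitary : Matrix ι ι ℂ)ᴴ
    else 0

/-- Square root of the Moore–Penrose pseudoinverse of a Hermitian PSD matrix
(junk `0` if not Hermitian). -/
noncomputable def pinvSqrt [Fintype ι] (A : Matrix ι ι ℂ) : Matrix ι ι ℂ := by
  classical exact
    if h : A.IsHermitian then
      (h.eigenvectorUnitary : Matrix ι ι ℂ) *
        Matrix.diagonal (fun i => ((Real.sqrt (h.eigenvalues i))⁻¹ : ℂ)) *
        (h.eigenvectorUnitary : Matrix ι ι ℂ)ᴴ
    else 0

/-- Relative entropy `D(ρ‖σ)`, equal to `tr(ρ(log₂ρ - log₂σ))/tr ρ` when the support of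
`ρ` is contained in the support of `σ`, and `+∞` otherwise. -/
noncomputable def relEnt [Fintype ι] (ρ σ : Matrix ι ι ℂ) : EReal := by
  classical exact
    if ∀ v : ι → ℂ, σ *ᵥ v = 0 → ρ *ᵥ v = 0 then
      (((ρ * (mlog ρ - mlog σ)).trace.re / ρ.trace.re : ℝ) : EReal)
    else ⊤

/-- `n`-fold tensor power of a matrix. -/
def tpow (A : Matrix ι ι ℂ) (n : ℕ) : Matrix (Fin n → ι) (Fin n → ι) ℂ :=
  Matrix.of fun x y => ∏ i, A (x i) (y i)

/-- Permutation invariance of a matrix on an `n`-fold tensor power space. -/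
def permInv {n : ℕ} (ρ : Matrix (Fin n → ι) (Fin n → ι) ℂ) : Prop :=
  ∀ π : Equiv.Perm (Fin n), ∀ x y, ρ (x ∘ π) (y ∘ π) = ρ x y

/-- Rank-one projector `|φ⟩⟨φ|`. -/
def vecOuter (φ : ι → ℂ) : Matrix ι ι ℂ :=
  Matrix.of fun i j => φ i * star (φ j)

variable {A B C D E : Type*}

/-- Partial trace over the second factor. -/
def ptr2 [Fintype E] (M : Matrix (D × E) (D × E) ℂ) : Matrix D D ℂ :=
  Matrix.of fun d d' => ∑ e, M (d, e) (d', e)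

/-- Partial trace over the `n` copies of `E` of a matrix on `(D ⊗ E)^⊗n`. -/
def ptrPow [Fintype E] {n : ℕ} (M : Matrix (Fin n → D × E) (Fin n → D × E) ℂ) :
    Matrix (Fin n → D) (Fin n → D) ℂ :=
  Matrix.of fun x y => ∑ e : Fin n → E, M (fun i => (x i, e i)) (fun i => (y i, e i))

/-- Marginal `ρ_AB` of a tripartite matrix. -/
def margAB [Fintype C] (ρ : Matrix (A × B × C) (A × B × C) ℂ) : Matrix (A × B) (A × B) ℂ :=
  Matrix.of fun x y => ∑ c, ρ (x.1, x.2, c) (y.1, y.2, c)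

/-- Marginal `ρ_BC` of a tripartite matrix. -/
def margBC [Fintype A] (ρ : Matrix (A × B × C) (A × B × C) ℂ) : Matrix (B × C) (B × C) ℂ :=
  Matrix.of fun x y => ∑ a, ρ (a, x.1, x.2) (a, y.1, y.2)

/-- Marginal `ρ_B` of a tripartite matrix. -/
def margB [Fintype A] [Fintype C] (ρ : Matrix (A × B × C) (A × B × C) ℂ) : Matrix B B ℂ :=
  Matrix.of fun b b' => ∑ a, ∑ c, ρ (a, b, c) (a, b', c)

/-- Conditional mutual information `I(A:C|B)_ρ = H(ρ_AB) + H(ρ_BC) - H(ρ_B) - H(ρ_ABC)`. -/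
noncomputable def cmi [Fintype A] [Fintype B] [Fintype C]
    (ρ : Matrix (A × B × C) (A × B × C) ℂ) : ℝ :=
  vnEntropy (margAB ρ) + vnEntropy (margBC ρ) - vnEntropy (margB ρ) - vnEntropy ρ

/-- Application of `I_A ⊗ T` to a matrix on `A ⊗ B`, for `T` a map from matrices over `B`
to matrices over `B ⊗ C`. -/
def extT (T : Matrix B B ℂ → Matrix (B × C) (B × C) ℂ)
    (ρ : Matrix (A × B) (A × B) ℂ) : Matrix (A × B × C) (A × B × C) ℂ :=
  Matrix.of fun x y => T (Matrix.of fun b b' => ρ (x.1, b) (y.1, b')) x.2 y.2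

/-- `M ⊗ id` on `B ⊗ C`. -/
def kronId (M : Matrix B B ℂ) : Matrix (B × C) (B × C) ℂ := by
  classical exact Matrix.of fun x y => if x.2 = y.2 then M x.1 y.1 else 0

end QMarkov

namespace QMarkov
variable {A B C : Type*}

/-- Marginal on the first and third factors of a tripartite matrix. -/
def marg13 [Fintype B] (ρ : Matrix (A × B × C) (A × B × C) ℂ) : Matrix (A × C) (A × C) ℂ :=
  Matrix.of fun x y => ∑ b, ρ (x.1, b, x.2) (y.1, b, y.2)

/-- Marginal on the third factor of a tripartite matrix. -/
def marg3 [Fintype A] [Fintype B] (ρ : Matrix (A × B × C) (A × B × C) ℂ) : Matrix C C ℂ :=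
  Matrix.of fun c c' => ∑ a, ∑ b, ρ (a, b, c) (a, b, c')

/-- Conditional mutual information `I(first : second | third)` of a tripartite matrix, i.e.
for `ρ` on `A ⊗ C ⊗ E` this is `I(A:C|E)_ρ = H(ρ_AE) + H(ρ_CE) - H(ρ_E) - H(ρ_ACE)`. -/
noncomputable def cmi13 [Fintype A] [Fintype B] [Fintype C]
    (ρ : Matrix (A × B × C) (A × B × C) ℂ) : ℝ :=
  vnEntropy (marg13 ρ) + vnEntropy (margBC ρ) - vnEntropy (marg3 ρ) - vnEntropy ρ

end QMarkov

/-!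
The tuples `x` whose weight `∏ i, λ (x i)` falls outside the typical window are controlled
by Chernoff's bound: for a threshold `2 ^ (-n c)` and an exponent `s` of the right sign,
`∏ λ (x i) ≤ 2 ^ (n s c) (∏ λ (x i)) ^ (1 + s)`, and summing over all tuples bounds the tail by
`(2 ^ (s c) ∑ λ ^ (1 + s)) ^ n`. This per-letter rate equals `1` at `s = 0` with derivative
`(c - H) log 2`, so for `c = H ∓ δ` it drops below `1` for small `s` of the appropriate sign.
-/

namespace QMarkov

open Real Topology

lemma exists_gt_lt_of_hasDerivAt_neg {f : ℝ → ℝ} {f' x : ℝ} (hf : HasDerivAt f f' x)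
    (hf' : f' < 0) : ∃ y, x < y ∧ f y < f x := by
  have hslope : ∀ᶠ y in 𝓝[>] x, slope f x y < 0 :=
    ((hasDerivAt_iff_tendsto_slope.mp hf).mono_left
      (nhdsGT_le_nhdsNE x)).eventually_lt_const hf'
  obtain ⟨y, hy, hxy⟩ := (hslope.and self_mem_nhdsWithin).exists
  rw [slope_def_field, div_neg_iff] at hy
  exact ⟨y, hxy, by rcases hy with ⟨-, h⟩ | ⟨h, -⟩ <;> linarith [show x < y from hxy]⟩

lemma exists_lt_lt_of_hasDerivAt_pos {f : ℝ → ℝ} {f' x : ℝ} (hf : HasDerivAt f f' x)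
    (hf' : 0 < f') : ∃ y, y < x ∧ f y < f x := by
  have hslope : ∀ᶠ y in 𝓝[<] x, 0 < slope f x y :=
    ((hasDerivAt_iff_tendsto_slope.mp hf).mono_left
      (nhdsLT_le_nhdsNE x)).eventually_const_lt hf'
  obtain ⟨y, hy, hyx⟩ := (hslope.and self_mem_nhdsWithin).exists
  rw [slope_def_field, div_pos_iff] at hy
  exact ⟨y, hyx, by rcases hy with ⟨-, h⟩ | ⟨h, -⟩ <;> linarith [show y < x from hyx]⟩

lemma exists_pos_pow_le_two_rpow {r : ℝ} (hr0 : 0 ≤ r) (hr1 : r < 1) :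
    ∃ κ : ℝ, 0 < κ ∧ ∀ n : ℕ, r ^ n ≤ (2 : ℝ) ^ (-(κ * n)) := by
  set r' := max r (1 / 2)
  have hr'0 : 0 < r' := lt_max_of_lt_right one_half_pos
  refine ⟨-logb 2 r', neg_pos.mpr (logb_neg one_lt_two hr'0 (max_lt hr1 one_half_lt_one)),
    fun n ↦ ?_⟩
  rw [neg_mul, neg_neg, rpow_mul zero_le_two, rpow_logb two_pos (by norm_num) hr'0,
    rpow_natCast]
  exact pow_le_pow_left₀ hr0 (le_max_left _ _) n

lemma sum_filter_notMem_Icc_le {β : Type*} (s : Finset β) {P : β → ℝ}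
    (hP : ∀ x ∈ s, 0 ≤ P x) (a b : ℝ) :
    ∑ x ∈ s with P x ∉ Set.Icc a b, P x ≤
      ∑ x ∈ s with P x < a, P x + ∑ x ∈ s with b < P x, P x := by
  simp only [Finset.sum_filter, ← Finset.sum_add_distrib]
  refine Finset.sum_le_sum fun x hx ↦ ?_
  have := hP x hx
  split_ifs <;> grind

lemma le_rpow_neg_mul_rpow_one_add {u b s : ℝ} (hu : 0 ≤ u) (hb : 0 < b)
    (h : (b ≤ u ∧ 0 ≤ s) ∨ (u ≤ b ∧ s ≤ 0)) : u ≤ b ^ (-s) * u ^ (1 + s) := by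
  rcases hu.eq_or_lt with rfl | hu
  · positivity
  have hsplit : u = u ^ (-s) * u ^ (1 + s) := by
    rw [← rpow_add hu, show -s + (1 + s) = 1 by ring, rpow_one]
  have hpow : u ^ (-s) ≤ b ^ (-s) := by
    rcases h with ⟨hbu, hs⟩ | ⟨hub, hs⟩
    · exact rpow_le_rpow_of_nonpos hb hbu (by linarith)
    · exact rpow_le_rpow hu.le hub (by linarith)
  calc u = u ^ (-s) * u ^ (1 + s) := hsplit
    _ ≤ b ^ (-s) * u ^ (1 + s) := by gcongr

section Chernoff

variable {α : Type*} [Fintype α] {w : α → ℝ}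

def chernoffRate (w : α → ℝ) (c s : ℝ) : ℝ := 2 ^ (s * c) * ∑ a, w a ^ (1 + s)

lemma sum_pi_prod_rpow (hw : ∀ a, 0 ≤ w a) (n : ℕ) (s : ℝ) :
    ∑ x : Fin n → α, (∏ i, w (x i)) ^ s = (∑ a, w a ^ s) ^ n := by
  rw [Fintype.sum_pow]
  exact Finset.sum_congr rfl fun x _ ↦ (finsetProd_rpow _ _ (fun i _ ↦ hw _) s).symm

lemma sum_le_chernoffRate_pow (hw : ∀ a, 0 ≤ w a) {n : ℕ} {c s : ℝ}
    (T : Finset (Fin n → α))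
    (hT : ∀ x ∈ T, ((2 : ℝ) ^ (-(n * c)) ≤ ∏ i, w (x i) ∧ 0 ≤ s) ∨
      (∏ i, w (x i) ≤ (2 : ℝ) ^ (-(n * c)) ∧ s ≤ 0)) :
    ∑ x ∈ T, ∏ i, w (x i) ≤ chernoffRate w c s ^ n := by
  set b : ℝ := 2 ^ (-(n * c))
  have hb : 0 < b := by positivity
  have hthreshold : b ^ (-s) = ((2 : ℝ) ^ (s * c)) ^ n := by
    rw [← rpow_mul zero_le_two, ← rpow_natCast, ← rpow_mul zero_le_two]
    ring_nf
  calc ∑ x ∈ T, ∏ i, w (x i)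
      ≤ ∑ x ∈ T, b ^ (-s) * (∏ i, w (x i)) ^ (1 + s) :=
        Finset.sum_le_sum fun x hx ↦
          le_rpow_neg_mul_rpow_one_add (Finset.prod_nonneg fun i _ ↦ hw _) hb (hT x hx)
    _ ≤ ∑ x : Fin n → α, b ^ (-s) * (∏ i, w (x i)) ^ (1 + s) :=
        Finset.sum_le_univ_sum_of_nonneg fun x ↦
          mul_nonneg (by positivity) (rpow_nonneg (Finset.prod_nonneg fun i _ ↦ hw _) _)
    _ = chernoffRate w c s ^ n := by
        rw [← Finset.mul_sum, sum_pi_prod_rpow hw, hthreshold, chernoffRate, mul_pow]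

lemma chernoffRate_nonneg (hw : ∀ a, 0 ≤ w a) (c s : ℝ) : 0 ≤ chernoffRate w c s :=
  mul_nonneg (by positivity) (Finset.sum_nonneg fun a _ ↦ rpow_nonneg (hw a) _)

lemma chernoffRate_zero (hw1 : ∑ a, w a = 1) (c : ℝ) : chernoffRate w c 0 = 1 := by
  simp [chernoffRate, hw1]

lemma hasDerivAt_rpow_one_add {a : ℝ} (ha : 0 ≤ a) :
    HasDerivAt (fun s : ℝ ↦ a ^ (1 + s)) (a * log a) 0 := by
  rcases ha.eq_or_lt with rfl | ha
  · -- `0 ^ (1 + s) = 0` as long as `1 + s ≠ 0`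
    rw [zero_mul]
    refine (hasDerivAt_const (0 : ℝ) (0 : ℝ)).congr_of_eventuallyEq ?_
    filter_upwards [eventually_ne_nhds (show (0 : ℝ) ≠ -1 by norm_num)] with s hs
    exact zero_rpow (by contrapose! hs; linarith)
  · simpa using ((hasStrictDerivAt_const_rpow ha (1 + 0)).hasDerivAt).comp_const_add 1 0

lemma hasDerivAt_chernoffRate (hw : ∀ a, 0 ≤ w a) (hw1 : ∑ a, w a = 1) (c : ℝ) :
    HasDerivAt (chernoffRate w c) (log 2 * c + ∑ a, w a * log (w a)) 0 := by
  have htwo : HasDerivAt (fun s : ℝ ↦ (2 : ℝ) ^ (s * c)) (log 2 * c) 0 := by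
    simpa [Function.comp_def] using
      ((hasStrictDerivAt_const_rpow two_pos (0 * c)).hasDerivAt).comp 0
        ((hasDerivAt_id (0 : ℝ)).mul_const c)
  have hmoment : HasDerivAt (fun s : ℝ ↦ ∑ a, w a ^ (1 + s)) (∑ a, w a * log (w a)) 0 :=
    HasDerivAt.fun_sum fun a _ ↦ hasDerivAt_rpow_one_add (hw a)
  have h := htwo.mul hmoment
  simp only [zero_mul, rpow_zero, one_mul, add_zero, rpow_one, hw1, mul_one] at h
  exact h

theorem exists_nontypical_weight_le (hw : ∀ a, 0 ≤ w a) (hw1 : ∑ a, w a = 1) {H : ℝ}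
    (hH : H = -∑ a, w a * logb 2 (w a)) {δ : ℝ} (hδ : 0 < δ) :
    ∃ κ : ℝ, 0 < κ ∧ ∃ C : ℝ, 0 < C ∧ ∀ n : ℕ,
      ∑ x ∈ Finset.univ.filter (fun x : Fin n → α ↦ (∏ i, w (x i)) ∉
          Set.Icc ((2 : ℝ) ^ (-((n : ℝ) * (H + δ)))) ((2 : ℝ) ^ (-((n : ℝ) * (H - δ))))),
        ∏ i, w (x i) ≤ C * (2 : ℝ) ^ (-(κ * n)) := by
  have hlog : ∑ a, w a * log (w a) = -(H * log 2) := by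
    simp only [hH, logb, neg_mul, neg_neg, Finset.sum_mul]
    exact Finset.sum_congr rfl fun a _ ↦ by field_simp
  have hlog2 := log_pos one_lt_two
  obtain ⟨s₁, hs₁, hrate₁⟩ := exists_gt_lt_of_hasDerivAt_neg
    (hasDerivAt_chernoffRate hw hw1 (H - δ)) (by rw [hlog]; nlinarith)
  obtain ⟨s₂, hs₂, hrate₂⟩ := exists_lt_lt_of_hasDerivAt_pos
    (hasDerivAt_chernoffRate hw hw1 (H + δ)) (by rw [hlog]; nlinarith)
  rw [chernoffRate_zero hw1] at hrate₁ hrate₂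
  set r₁ := chernoffRate w (H - δ) s₁
  set r₂ := chernoffRate w (H + δ) s₂
  obtain ⟨κ, hκ, hκr⟩ := exists_pos_pow_le_two_rpow
    ((chernoffRate_nonneg hw _ _).trans (le_max_left r₁ r₂)) (max_lt hrate₁ hrate₂)
  refine ⟨κ, hκ, 2, two_pos, fun n ↦ ?_⟩
  have hprod : ∀ x ∈ (Finset.univ : Finset (Fin n → α)), 0 ≤ ∏ i, w (x i) :=
    fun x _ ↦ Finset.prod_nonneg fun i _ ↦ hw _
  calc _ ≤ _ := sum_filter_notMem_Icc_le _ hprod _ _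
    _ ≤ r₂ ^ n + r₁ ^ n := add_le_add
        (sum_le_chernoffRate_pow hw _ fun x hx ↦ .inr ⟨(Finset.mem_filter.1 hx).2.le, hs₂.le⟩)
        (sum_le_chernoffRate_pow hw _ fun x hx ↦ .inl ⟨(Finset.mem_filter.1 hx).2.le, hs₁.le⟩)
    _ ≤ max r₁ r₂ ^ n + max r₁ r₂ ^ n := by
        gcongr
        exacts [chernoffRate_nonneg hw _ _, le_max_right _ _, chernoffRate_nonneg hw _ _,
          le_max_left _ _]
    _ ≤ 2 * (2 : ℝ) ^ (-(κ * n)) := by linarith [hκr n]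

end Chernoff

open Classical

/-- Asymptotic equipartition: the total weight of non-typical eigenvalues of
`ρ^⊗n` decays exponentially fast in `n`. -/
theorem typical_weight_tendsto_one_exponentially
    (d : ℕ) (ρ : Matrix (Fin d) (Fin d) ℂ) (hρ : ρ.PosSemidef) (hρtr : ρ.trace = 1)
    (lam : Fin d → ℝ) (hlam : lam = hρ.1.eigenvalues)
    (H : ℝ) (hH : H = -∑ i, lam i * Real.logb 2 (lam i))
    (δ : ℝ) (hδ : 0 < δ)
    (p : ℕ → ℝ)
    (hp : ∀ n : ℕ, p n = ∑ x ∈ Finset.univ.filter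
        (fun x : Fin n → Fin d =>
          (∏ i, lam (x i)) ∉
            Set.Icc ((2 : ℝ) ^ (-((n : ℝ) * (H + δ)))) ((2 : ℝ) ^ (-((n : ℝ) * (H - δ))))),
        ∏ i, lam (x i)) :
    ∃ κ : ℝ, 0 < κ ∧ ∃ Cst : ℝ, 0 < Cst ∧ ∀ n : ℕ, p n ≤ Cst * (2 : ℝ) ^ (-(κ * n)) := by
  have hlam_nonneg : ∀ i, 0 ≤ lam i := hlam ▸ hρ.eigenvalues_nonneg
  have hlam_sum : ∑ i, lam i = 1 := by
    have htrace := hρ.1.trace_eq_sum_eigenvalues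
    rw [hρtr, ← hlam] at htrace
    simpa using congrArg Complex.re htrace.symm
  obtain ⟨κ, hκ, C, hC, hbound⟩ := exists_nontypical_weight_le hlam_nonneg hlam_sum hH hδ
  exact ⟨κ, hκ, C, hC, fun n ↦ (hp n).trans_le (hbound n)⟩

end QMarkov
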